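/- Let C and D be stable configuration structures, let X be a configuration of C and Y a configuration of D, and suppose f : X ≅ Y is a label-preserving order isomorphism. Then for every formula φ of the reverse-only logic EIL_ro and every environment ρ that is permissible for φ and X, one has C, X, ρ ⊨ φ if and only if D, Y, f ∘ (ρ restricted to the free identifiers of φ) ⊨ φ. -/

import Mathlib

open scoped Classical

noncomputable section

namespace EILPaper

/-- A configuration structure over event type `E` and alphabet `Act`:
a family of finite sets of events (configurations) together with a labelling. -/
structure CS (E Act : Type) where
  Conf : Set (Finset E)
  label : E → Act

namespace CS

variable {E Act : Type}

/-- Causality order `d ≤_X e`. -/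
def le (C : CS E Act) (X : Finset E) (d e : E) : Prop :=
  ∀ Y ∈ C.Conf, Y ⊆ X → e ∈ Y → d ∈ Y

/-- Stability of a configuration structure. -/
structure Stable (C : CS E Act) : Prop where
  rooted : ∅ ∈ C.Conf
  connected : ∀ X ∈ C.Conf, X ≠ ∅ → ∃ e ∈ X, X.erase e ∈ C.Conf
  unionClosed : ∀ X ∈ C.Conf, ∀ Y ∈ C.Conf, ∀ Z ∈ C.Conf, X ∪ Y ⊆ Z → X ∪ Y ∈ C.Conf
  interClosed : ∀ X ∈ C.Conf, ∀ Y ∈ C.Conf, ∀ Z ∈ C.Conf, X ∪ Y ⊆ Z → X ∩ Y ∈ C.Conf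

/-- Single-event forward transition `X →^e X'`. -/
def TranE (C : CS E Act) (X X' : Finset E) (e : E) : Prop :=
  X ∈ C.Conf ∧ X' ∈ C.Conf ∧ X ⊆ X' ∧ X' \ X = {e}

/-- Label-indexed forward transition `X →^a X'`. -/
def TranA (C : CS E Act) (X X' : Finset E) (a : Act) : Prop :=
  ∃ e, C.TranE X X' e ∧ C.label e = a

/-- Reverse transition `X ⇝^e X'`. -/
def RTranE (C : CS E Act) (X X' : Finset E) (e : E) : Prop := C.TranE X' X e

/-- Reverse transition `X ⇝^a X'`. -/
def RTranA (C : CS E Act) (X X' : Finset E) (a : Act) : Prop := C.TranA X' X a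

/-- Image-finiteness with respect to forward transitions. -/
def ImageFinite (C : CS E Act) : Prop :=
  ∀ X ∈ C.Conf, ∀ a : Act, {X' | C.TranA X X' a}.Finite

/-- A configuration structure is finite if its set of configurations is finite. -/
def Finite (C : CS E Act) : Prop := C.Conf.Finite

/-- The events of a configuration structure. -/
def events (C : CS E Act) : Set E := {e | ∃ X ∈ C.Conf, e ∈ X}

end CS

variable {E E1 E2 E3 Id Act : Type}

/-- `f` is a label-preserving order isomorphism from configuration `X` of `C`
to configuration `Y` of `D`. -/
def IsIso (C : CS E1 Act) (D : CS E2 Act) (X : Finset E1) (Y : Finset E2)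
    (f : E1 → E2) : Prop :=
  (∀ e ∈ X, f e ∈ Y) ∧
  (∀ d ∈ X, ∀ e ∈ X, f d = f e → d = e) ∧
  (∀ e' ∈ Y, ∃ e ∈ X, f e = e') ∧
  (∀ e ∈ X, D.label (f e) = C.label e) ∧
  (∀ d ∈ X, ∀ e ∈ X, (C.le X d e ↔ D.le Y (f d) (f e)))

/-- `X ≅ Y`: the configurations are isomorphic. -/
def Isom (C : CS E1 Act) (D : CS E2 Act) (X : Finset E1) (Y : Finset E2) : Prop :=
  ∃ f, IsIso C D X Y f

/-- Formulas of Event Identifier Logic (EIL). -/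
inductive EIL (Id Act : Type) : Type
  | tt : EIL Id Act
  | neg : EIL Id Act → EIL Id Act
  | conj : EIL Id Act → EIL Id Act → EIL Id Act
  | fwd : Id → Act → EIL Id Act → EIL Id Act   -- forward diamond ⟨x:a⟩φ
  | decl : Id → Act → EIL Id Act → EIL Id Act  -- declaration (x:a)φ
  | rev : Id → EIL Id Act → EIL Id Act         -- reverse diamond ⟨x⟩φ

namespace EIL

/-- Free identifiers of a formula. -/
def fi : EIL Id Act → Set Id
  | .tt => ∅
  | .neg φ => φ.fi
  | .conj φ ψ => φ.fi ∪ ψ.fi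
  | .fwd x _ φ => φ.fi \ {x}
  | .decl x _ φ => φ.fi \ {x}
  | .rev x φ => φ.fi ∪ {x}

/-- A formula is closed if it has no free identifiers. -/
def Closed (φ : EIL Id Act) : Prop := φ.fi = ∅

end EIL

/-- `ρ` is a permissible environment for `φ` and `X`. -/
def Permissible (φ : EIL Id Act) (ρ : Id → Option E) (X : Finset E) : Prop :=
  ∀ x ∈ φ.fi, ∃ e ∈ X, ρ x = some e

/-- The satisfaction relation `C, X, ρ ⊨ φ`. -/
def Sat (C : CS E Act) : EIL Id Act → Finset E → (Id → Option E) → Prop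
  | .tt, _, _ => True
  | .neg φ, X, ρ => ¬ Sat C φ X ρ
  | .conj φ ψ, X, ρ => Sat C φ X ρ ∧ Sat C ψ X ρ
  | .fwd x a φ, X, ρ =>
      ∃ e X', C.TranE X X' e ∧ C.label e = a ∧
        Sat C φ X' (Function.update ρ x (some e))
  | .decl x a φ, X, ρ =>
      ∃ e ∈ X, C.label e = a ∧ Sat C φ X (Function.update ρ x (some e))
  | .rev x φ, X, ρ =>
      ∃ e X', C.RTranE X X' e ∧ ρ x = some e ∧ Permissible φ ρ X' ∧ Sat C φ X' ρ

/-- Satisfaction of a closed formula in a configuration: `C, X ⊨ φ`. -/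
def SatC (C : CS E Act) (φ : EIL Id Act) (X : Finset E) : Prop :=
  Sat C φ X fun _ => none

/-- Satisfaction of a closed formula by a structure: `C ⊨ φ`. -/
def SatS (C : CS E Act) (φ : EIL Id Act) : Prop := SatC C φ ∅

/-- The reverse-only sublogic EIL_ro. -/
inductive RO : EIL Id Act → Prop
  | tt : RO .tt
  | neg {φ} : RO φ → RO (.neg φ)
  | conj {φ ψ} : RO φ → RO ψ → RO (.conj φ ψ)
  | decl {x a φ} : RO φ → RO (.decl x a φ)
  | rev {x φ} : RO φ → RO (.rev x φ)

/-- The declaration-free reverse-only sublogic EIL_dfro. -/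
inductive DFRO : EIL Id Act → Prop
  | tt : DFRO .tt
  | neg {φ} : DFRO φ → DFRO (.neg φ)
  | conj {φ ψ} : DFRO φ → DFRO ψ → DFRO (.conj φ ψ)
  | rev {x φ} : DFRO φ → DFRO (.rev x φ)

/-- The sublogic EIL_h: no forward move may occur inside a reverse move. -/
inductive InH : EIL Id Act → Prop
  | tt : InH .tt
  | neg {φ} : InH φ → InH (.neg φ)
  | conj {φ ψ} : InH φ → InH ψ → InH (.conj φ ψ)
  | fwd {x a φ} : InH φ → InH (.fwd x a φ)
  | decl {x a φ} : InH φ → InH (.decl x a φ)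
  | ro {φ} : RO φ → InH φ

/-- The sublogic EIL_wh: all formulas are closed, reverse-only parts are closed. -/
inductive InWH : EIL Id Act → Prop
  | tt : InWH .tt
  | neg {φ} : InWH φ → InWH (.neg φ)
  | conj {φ ψ} : InWH φ → InWH ψ → InWH (.conj φ ψ)
  | fwd {x a φ} : InWH φ → x ∉ φ.fi → InWH (.fwd x a φ)
  | roClosed {φ} : RO φ → φ.Closed → InWH φ

/-- The sublogic EIL_hwh: forward diamonds only applied to closed formulas. -/
inductive InHWH : EIL Id Act → Prop
  | tt : InHWH .tt
  | neg {φ} : InHWH φ → InHWH (.neg φ)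
  | conj {φ ψ} : InHWH φ → InHWH ψ → InHWH (.conj φ ψ)
  | fwd {x a φ} : InHWH φ → φ.Closed → InHWH (.fwd x a φ)
  | decl {x a φ} : InHWH φ → InHWH (.decl x a φ)
  | rev {x φ} : InHWH φ → InHWH (.rev x φ)

/-- Logical equivalence of two structures with respect to a sublogic `L`. -/
def EquivL (L : EIL Id Act → Prop) (C : CS E1 Act) (D : CS E2 Act) : Prop :=
  ∀ φ : EIL Id Act, L φ → φ.Closed → (SatS C φ ↔ SatS D φ)

/-- Weak history-preserving bisimulation. -/
structure IsWHBisim (C : CS E1 Act) (D : CS E2 Act)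
    (R : Finset E1 → Finset E2 → Prop) : Prop where
  root : R ∅ ∅
  iso : ∀ X Y, R X Y → Isom C D X Y
  forth : ∀ X Y a X', R X Y → C.TranA X X' a → ∃ Y', D.TranA Y Y' a ∧ R X' Y'
  back : ∀ X Y a Y', R X Y → D.TranA Y Y' a → ∃ X', C.TranA X X' a ∧ R X' Y'

/-- History-preserving bisimulation. -/
structure IsHBisim (C : CS E1 Act) (D : CS E2 Act)
    (R : Finset E1 → Finset E2 → (E1 → E2) → Prop) : Prop where
  root : ∃ f, R ∅ ∅ f
  iso : ∀ X Y f, R X Y f → IsIso C D X Y f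
  forth : ∀ X Y f a X', R X Y f → C.TranA X X' a →
    ∃ Y' f', D.TranA Y Y' a ∧ R X' Y' f' ∧ ∀ e ∈ X, f' e = f e
  back : ∀ X Y f a Y', R X Y f → D.TranA Y Y' a →
    ∃ X' f', C.TranA X X' a ∧ R X' Y' f' ∧ ∀ e ∈ X, f' e = f e

/-- Hereditary history-preserving bisimulation. -/
structure IsHHBisim (C : CS E1 Act) (D : CS E2 Act)
    (R : Finset E1 → Finset E2 → (E1 → E2) → Prop)
    extends IsHBisim C D R : Prop where
  rforth : ∀ X Y f a X', R X Y f → C.RTranA X X' a →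
    ∃ Y' f', D.RTranA Y Y' a ∧ R X' Y' f' ∧ ∀ e ∈ X', f e = f' e
  rback : ∀ X Y f a Y', R X Y f → D.RTranA Y Y' a →
    ∃ X' f', C.RTranA X X' a ∧ R X' Y' f' ∧ ∀ e ∈ X', f e = f' e

/-- Hereditary weak history-preserving bisimulation. -/
structure IsHWHBisim (C : CS E1 Act) (D : CS E2 Act)
    (R : Finset E1 → Finset E2 → (E1 → E2) → Prop) : Prop where
  root : ∃ f, R ∅ ∅ f
  iso : ∀ X Y f, R X Y f → IsIso C D X Y f
  forth : ∀ X Y f a X', R X Y f → C.TranA X X' a →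
    ∃ Y' f', D.TranA Y Y' a ∧ R X' Y' f'
  back : ∀ X Y f a Y', R X Y f → D.TranA Y Y' a →
    ∃ X' f', C.TranA X X' a ∧ R X' Y' f'
  rforth : ∀ X Y f a X', R X Y f → C.RTranA X X' a →
    ∃ Y' f', D.RTranA Y Y' a ∧ R X' Y' f' ∧ ∀ e ∈ X', f e = f' e
  rback : ∀ X Y f a Y', R X Y f → D.RTranA Y Y' a →
    ∃ X' f', C.RTranA X X' a ∧ R X' Y' f' ∧ ∀ e ∈ X', f e = f' e

/-- WH equivalence. -/
def WHEquiv (C : CS E1 Act) (D : CS E2 Act) : Prop := ∃ R, IsWHBisim C D R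

/-- H equivalence. -/
def HEquiv (C : CS E1 Act) (D : CS E2 Act) : Prop := ∃ R, IsHBisim C D R

/-- HH equivalence. -/
def HHEquiv (C : CS E1 Act) (D : CS E2 Act) : Prop := ∃ R, IsHHBisim C D R

/-- HWH equivalence. -/
def HWHEquiv (C : CS E1 Act) (D : CS E2 Act) : Prop := ∃ R, IsHWHBisim C D R

/-! A reverse-only formula evaluated at `X` only ever visits configurations obtained from `X` by
removing events one at a time. In a stable structure, `X.erase e` is a configuration exactly when
`e` is maximal for the causal order `≤_X`, and the causal order of a subconfiguration is the
restriction of `≤_X`. Hence an isomorphism `X ≅ Y` restricts to an isomorphism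
`X.erase e ≅ Y.erase (f e)` whenever either side is a configuration, and satisfaction transfers by
induction on the formula, with the environment for `Y` obtained by composing with `f`. -/

namespace CS

variable {C : CS E Act}

theorem tranE_iff {X' X : Finset E} {e : E} :
    C.TranE X' X e ↔ X' ∈ C.Conf ∧ X ∈ C.Conf ∧ e ∈ X ∧ X' = X.erase e := by
  constructor
  · rintro ⟨hX', hX, hsub, hdiff⟩
    have he : e ∈ X \ X' := hdiff ▸ Finset.mem_singleton_self e
    refine ⟨hX', hX, (Finset.mem_sdiff.mp he).1, ?_⟩
    rw [← Finset.sdiff_singleton_eq_erase, ← hdiff, Finset.sdiff_sdiff_eq_self hsub]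
  · rintro ⟨hX', hX, he, rfl⟩
    exact ⟨hX', hX, Finset.erase_subset e X, Finset.sdiff_erase_self he⟩

theorem Stable.le_iff_of_subset (hC : C.Stable) {W X : Finset E} (hW : W ∈ C.Conf)
    (hX : X ∈ C.Conf) (hWX : W ⊆ X) {d a : E} (ha : a ∈ W) :
    C.le W d a ↔ C.le X d a := by
  refine ⟨fun h Z hZ hZX haZ => ?_, fun h Z hZ hZW => h Z hZ (hZW.trans hWX)⟩
  have hZW : Z ∩ W ∈ C.Conf := hC.interClosed Z hZ W hW X hX (Finset.union_subset hZX hWX)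
  exact (Finset.mem_inter.mp
    (h _ hZW Finset.inter_subset_right (Finset.mem_inter.mpr ⟨haZ, ha⟩))).1

theorem Stable.biUnion_mem {ι : Type*} (hC : C.Stable) {X : Finset E} (hX : X ∈ C.Conf)
    (s : Finset ι) {F : ι → Finset E} (hF : ∀ i ∈ s, F i ∈ C.Conf) (hFX : ∀ i ∈ s, F i ⊆ X) :
    s.biUnion F ∈ C.Conf := by
  induction s using Finset.induction_on with
  | empty => simpa using hC.rooted
  | insert i s _ ih =>
    simp only [Finset.mem_insert, forall_eq_or_imp] at hF hFX
    rw [Finset.biUnion_insert]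
    exact hC.unionClosed _ hF.1 _ (ih hF.2 hFX.2) X hX
      (Finset.union_subset hFX.1 (Finset.biUnion_subset.mpr hFX.2))

/-- A configuration of minimal size among those below `X` containing `d` is contained in all the
others, by closure under intersection, so it is the principal down-set of `d`. -/
theorem Stable.filter_le_mem (hC : C.Stable) {X : Finset E} (hX : X ∈ C.Conf) {d : E}
    (hd : d ∈ X) : X.filter (C.le X · d) ∈ C.Conf := by
  set T := X.powerset.filter (fun Z => Z ∈ C.Conf ∧ d ∈ Z)
  have hXT : X ∈ T := by simp [T, hX, hd]
  obtain ⟨Z₀, hZ₀T, hmin⟩ := T.exists_min_image Finset.card ⟨X, hXT⟩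
  simp only [T, Finset.mem_filter, Finset.mem_powerset] at hZ₀T hmin
  obtain ⟨hZ₀X, hZ₀, hdZ₀⟩ := hZ₀T
  have hZ₀_le : ∀ Z ∈ C.Conf, Z ⊆ X → d ∈ Z → Z₀ ⊆ Z := fun Z hZ hZX hdZ => by
    have hZZ₀ : Z ∩ Z₀ ∈ C.Conf :=
      hC.interClosed Z hZ Z₀ hZ₀ X hX (Finset.union_subset hZX hZ₀X)
    have hcard := hmin _
      ⟨Finset.inter_subset_left.trans hZX, hZZ₀, Finset.mem_inter.mpr ⟨hdZ, hdZ₀⟩⟩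
    rw [← Finset.eq_of_subset_of_card_le Finset.inter_subset_right hcard]
    exact Finset.inter_subset_left
  convert hZ₀
  ext a
  simp only [Finset.mem_filter]
  exact ⟨fun ⟨_, hle⟩ => hle Z₀ hZ₀ hZ₀X hdZ₀,
    fun ha => ⟨hZ₀X ha, fun Z hZ hZX hdZ => hZ₀_le Z hZ hZX hdZ ha⟩⟩

theorem Stable.mem_of_le_closed (hC : C.Stable) {X S : Finset E} (hX : X ∈ C.Conf) (hSX : S ⊆ X)
    (hS : ∀ d a, C.le X d a → a ∈ S → d ∈ S) : S ∈ C.Conf := by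
  have hS_eq : S.biUnion (fun d => X.filter (C.le X · d)) = S := by
    ext a
    simp only [Finset.mem_biUnion, Finset.mem_filter]
    exact ⟨fun ⟨d, hdS, _, hle⟩ => hS a d hle hdS, fun ha => ⟨a, ha, hSX ha, fun _ _ _ h => h⟩⟩
  rw [← hS_eq]
  exact hC.biUnion_mem hX S (fun d hd => hC.filter_le_mem hX (hSX hd))
    (fun _ _ => Finset.filter_subset _ _)

theorem Stable.erase_mem_iff (hC : C.Stable) {X : Finset E} (hX : X ∈ C.Conf) {e : E}
    (he : e ∈ X) : X.erase e ∈ C.Conf ↔ ∀ a ∈ X, C.le X e a → a = e := by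
  constructor
  · intro hXe a ha hle
    by_contra hae
    exact Finset.notMem_erase e X
      (hle _ hXe (Finset.erase_subset e X) (Finset.mem_erase.mpr ⟨hae, ha⟩))
  · intro hmax
    refine hC.mem_of_le_closed hX (Finset.erase_subset e X) fun d a hle ha => ?_
    obtain ⟨hae, haX⟩ := Finset.mem_erase.mp ha
    refine Finset.mem_erase.mpr ⟨?_, hle X hX subset_rfl haX⟩
    rintro rfl
    exact hae (hmax a haX hle)

end CS

namespace IsIso

variable {C : CS E1 Act} {D : CS E2 Act} {X : Finset E1} {Y : Finset E2} {f : E1 → E2}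

theorem exists_mem_iff (hf : IsIso C D X Y f) {P : E2 → Prop} :
    (∃ e' ∈ Y, P e') ↔ ∃ e ∈ X, P (f e) := by
  refine ⟨fun ⟨e', he', hP⟩ => ?_, fun ⟨e, he, hP⟩ => ⟨f e, hf.1 e he, hP⟩⟩
  obtain ⟨e, he, rfl⟩ := hf.2.2.1 e' he'
  exact ⟨e, he, hP⟩

theorem forall_mem_iff (hf : IsIso C D X Y f) {P : E2 → Prop} :
    (∀ e' ∈ Y, P e') ↔ ∀ e ∈ X, P (f e) := by
  simpa using (hf.exists_mem_iff (P := fun e' => ¬ P e')).not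

theorem map_mem_erase (hf : IsIso C D X Y f) {d e : E1} (he : e ∈ X) (hd : d ∈ X.erase e) :
    f d ∈ Y.erase (f e) := by
  obtain ⟨hde, hd⟩ := Finset.mem_erase.mp hd
  exact Finset.mem_erase.mpr ⟨fun h => hde (hf.2.1 d hd e he h), hf.1 d hd⟩

theorem erase_mem_iff (hC : C.Stable) (hD : D.Stable) (hX : X ∈ C.Conf) (hY : Y ∈ D.Conf)
    (hf : IsIso C D X Y f) {e : E1} (he : e ∈ X) :
    X.erase e ∈ C.Conf ↔ Y.erase (f e) ∈ D.Conf := by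
  rw [hC.erase_mem_iff hX he, hD.erase_mem_iff hY (hf.1 e he), hf.forall_mem_iff]
  refine forall₂_congr fun a ha => ?_
  rw [hf.2.2.2.2 e he a ha]
  exact imp_congr_right fun _ => ⟨congrArg f, hf.2.1 a ha e he⟩

theorem erase (hC : C.Stable) (hD : D.Stable) (hX : X ∈ C.Conf) (hY : Y ∈ D.Conf)
    (hf : IsIso C D X Y f) {e : E1} (he : e ∈ X) (hXe : X.erase e ∈ C.Conf) :
    IsIso C D (X.erase e) (Y.erase (f e)) f := by
  have hYe := (hf.erase_mem_iff hC hD hX hY he).mp hXe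
  have hmaps' := fun d (hd : d ∈ X.erase e) => hf.map_mem_erase he hd
  obtain ⟨-, hinj, hsurj, hlabel, hle⟩ := hf
  refine ⟨hmaps', fun d hd a ha => hinj d (Finset.mem_of_mem_erase hd) a
      (Finset.mem_of_mem_erase ha), fun e' he' => ?_,
    fun d hd => hlabel d (Finset.mem_of_mem_erase hd), fun d hd a ha => ?_⟩
  · obtain ⟨hne, he'⟩ := Finset.mem_erase.mp he'
    obtain ⟨d, hd, rfl⟩ := hsurj e' he'
    exact ⟨d, Finset.mem_erase.mpr ⟨fun h => hne (h ▸ rfl), hd⟩, rfl⟩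
  · rw [hC.le_iff_of_subset hXe hX (Finset.erase_subset e X) ha,
      hD.le_iff_of_subset hYe hY (Finset.erase_subset _ Y) (hmaps' a ha)]
    exact hle d (Finset.mem_of_mem_erase hd) a (Finset.mem_of_mem_erase ha)

end IsIso

def AgreeOn (s : Set Id) (X : Finset E1) (f : E1 → E2) (ρ : Id → Option E1)
    (ρ' : Id → Option E2) : Prop :=
  ∀ x ∈ s, ∃ e ∈ X, ρ x = some e ∧ ρ' x = some (f e)

namespace AgreeOn

variable {s t : Set Id} {X : Finset E1} {f : E1 → E2} {ρ : Id → Option E1} {ρ' : Id → Option E2}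

theorem mono (h : AgreeOn s X f ρ ρ') (hts : t ⊆ s) : AgreeOn t X f ρ ρ' :=
  fun x hx => h x (hts hx)

theorem update {x : Id} (h : AgreeOn (s \ {x}) X f ρ ρ') {e : E1} (he : e ∈ X) :
    AgreeOn s X f (Function.update ρ x (some e)) (Function.update ρ' x (some (f e))) := by
  intro y hy
  by_cases hyx : y = x
  · subst hyx
    exact ⟨e, he, by simp, by simp⟩
  · simpa [Function.update_of_ne hyx] using h y ⟨hy, hyx⟩

theorem permissible_erase_iff {φ : EIL Id Act} (h : AgreeOn φ.fi X f ρ ρ') {e : E1} :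
    Permissible φ ρ (X.erase e) ↔ AgreeOn φ.fi (X.erase e) f ρ ρ' := by
  refine ⟨fun hperm y hy => ?_, fun h' y hy => ?_⟩
  · obtain ⟨d, hd, hρy⟩ := hperm y hy
    obtain ⟨d', -, hρy', hρ'y⟩ := h y hy
    obtain rfl : d = d' := Option.some_inj.mp (hρy.symm.trans hρy')
    exact ⟨d, hd, hρy, hρ'y⟩
  · obtain ⟨d, hd, hρy, -⟩ := h' y hy
    exact ⟨d, hd, hρy⟩

theorem permissible_erase_iff_of_isIso {C : CS E1 Act} {D : CS E2 Act} {Y : Finset E2}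
    {φ : EIL Id Act} (h : AgreeOn φ.fi X f ρ ρ') (hf : IsIso C D X Y f) {e : E1} (he : e ∈ X) :
    Permissible φ ρ' (Y.erase (f e)) ↔ AgreeOn φ.fi (X.erase e) f ρ ρ' := by
  refine ⟨fun hperm y hy => ?_, fun h' y hy => ?_⟩
  · obtain ⟨d', hd', hρ'y'⟩ := hperm y hy
    obtain ⟨d, hd, hρy, hρ'y⟩ := h y hy
    obtain rfl : f d = d' := Option.some_inj.mp (hρ'y.symm.trans hρ'y')
    refine ⟨d, Finset.mem_erase.mpr ⟨?_, hd⟩, hρy, hρ'y⟩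
    rintro rfl
    exact Finset.notMem_erase _ _ hd'
  · obtain ⟨d, hd, -, hρ'y⟩ := h' y hy
    exact ⟨f d, hf.map_mem_erase he hd, hρ'y⟩

end AgreeOn

theorem sat_rev_iff {C : CS E Act} {x : Id} {φ : EIL Id Act} {X : Finset E} {ρ : Id → Option E}
    {e : E} (hx : ρ x = some e) :
    Sat C (.rev x φ) X ρ ↔ X ∈ C.Conf ∧ e ∈ X ∧ X.erase e ∈ C.Conf ∧
      Permissible φ ρ (X.erase e) ∧ Sat C φ (X.erase e) ρ := by
  simp only [Sat, CS.RTranE, CS.tranE_iff, hx, Option.some_inj]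
  constructor
  · rintro ⟨_, _, ⟨hXe, hX, he, rfl⟩, rfl, hperm, hsat⟩
    exact ⟨hX, he, hXe, hperm, hsat⟩
  · rintro ⟨hX, he, hXe, hperm, hsat⟩
    exact ⟨e, _, ⟨hXe, hX, he, rfl⟩, rfl, hperm, hsat⟩

theorem sat_iff_of_isIso {C : CS E1 Act} {D : CS E2 Act} (hC : C.Stable) (hD : D.Stable)
    {f : E1 → E2} {φ : EIL Id Act} (hφ : RO φ) :
    ∀ {X : Finset E1} {Y : Finset E2} {ρ : Id → Option E1} {ρ' : Id → Option E2},
      X ∈ C.Conf → Y ∈ D.Conf → IsIso C D X Y f → AgreeOn φ.fi X f ρ ρ' →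
      (Sat C φ X ρ ↔ Sat D φ Y ρ') := by
  induction hφ with
  | tt => exact fun _ _ _ _ => Iff.rfl
  | neg _ ih => exact fun hX hY hf h => not_congr (ih hX hY hf h)
  | conj _ _ ih₁ ih₂ =>
    exact fun hX hY hf h => and_congr (ih₁ hX hY hf (h.mono Set.subset_union_left))
      (ih₂ hX hY hf (h.mono Set.subset_union_right))
  | @decl x a ψ _ ih =>
    intro X Y ρ ρ' hX hY hf h
    simp only [Sat]
    rw [hf.exists_mem_iff]
    refine exists_congr fun e => and_congr_right fun he => ?_
    rw [hf.2.2.2.1 e he]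
    exact and_congr_right fun _ => ih hX hY hf (h.update he)
  | @rev x ψ _ ih =>
    intro X Y ρ ρ' hX hY hf h
    obtain ⟨e, he, hρx, hρ'x⟩ := h x (Or.inr rfl)
    have hψ := h.mono Set.subset_union_left
    rw [sat_rev_iff hρx, sat_rev_iff hρ'x, hψ.permissible_erase_iff,
      hψ.permissible_erase_iff_of_isIso hf he, ← hf.erase_mem_iff hC hD hX hY he]
    simp only [hX, hY, he, hf.1 e he, true_and]
    exact and_congr_right fun hXe => and_congr_right fun h' =>
      ih hXe (hf.erase_mem_iff hC hD hX hY he |>.mp hXe) (hf.erase hC hD hX hY he hXe) h'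

theorem stmt0_general {E1 E2 Id Act : Type}
    (C : CS E1 Act) (D : CS E2 Act)
    (hC : C.Stable) (hD : D.Stable)
    (X : Finset E1) (hX : X ∈ C.Conf) (Y : Finset E2) (hY : Y ∈ D.Conf)
    (f : E1 → E2) (hf : IsIso C D X Y f)
    (φ : EIL Id Act) (hφ : RO φ)
    (ρ : Id → Option E1) (hρ : Permissible φ ρ X) :
    Sat C φ X ρ ↔ Sat D φ Y (fun x => if x ∈ φ.fi then (ρ x).map f else none) := by
  refine sat_iff_of_isIso hC hD hφ hX hY hf fun x hx => ?_
  obtain ⟨e, he, hρx⟩ := hρ x hx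
  exact ⟨e, he, hρx, by simp [hx, hρx]⟩

/-- reverse-only formulas are preserved by label-preserving order
isomorphisms between configurations. -/
theorem stmt0 {E1 E2 Id Act : Type} [Infinite Id]
    (C : CS E1 Act) (D : CS E2 Act)
    (hC : C.Stable) (hCif : C.ImageFinite)
    (hD : D.Stable) (hDif : D.ImageFinite)
    (X : Finset E1) (hX : X ∈ C.Conf) (Y : Finset E2) (hY : Y ∈ D.Conf)
    (f : E1 → E2) (hf : IsIso C D X Y f)
    (φ : EIL Id Act) (hφ : RO φ)
    (ρ : Id → Option E1) (hρ : Permissible φ ρ X) :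
    Sat C φ X ρ ↔ Sat D φ Y (fun x => if x ∈ φ.fi then (ρ x).map f else none) :=
  stmt0_general C D hC hD X hX Y hY f hf φ hφ ρ hρ

end EILPaper
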